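/- Let n ≥ 1 and 0 ≤ c ≤ 1. Then μ_n({u ∈ (0,1)^n : there exists k with 0 ≤ k ≤ n such that u_(k+1) − u_(k) > c}) ≤ (n+1)(1 − c)^n; i.e., the probability that the maximum consecutive spacing of the order statistics of n i.i.d. Uniform(0,1) random variables exceeds c is at most (n+1)(1 − c)^n. -/

import Mathlib

open MeasureTheory
open scoped ENNReal
open scoped Classical

noncomputable def unifMeas : Measure ℝ := MeasureTheory.volume.restrict (Set.Ioo (0 : ℝ) 1)

noncomputable def unifPi (n : ℕ) : Measure (Fin n → ℝ) := Measure.pi fun _ => unifMeas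

/-- The `k`-th order statistic `u_(k) = inf {x : #{i : u i ≤ x} ≥ k}` for `1 ≤ k ≤ n`,
with the conventions `u_(0) := 0` and `u_(n+1) := 1`. -/
noncomputable def orderStat (n : ℕ) (u : Fin n → ℝ) (k : ℕ) : ℝ :=
  if k = 0 then 0
  else if k = n + 1 then 1
  else sInf {x : ℝ | k ≤ (Finset.univ.filter fun i : Fin n => u i ≤ x).card}

/-!
If some spacing exceeds `c`, then either every point exceeds `c`, or some point `u i` is followed
by an empty window `(u i, u i + c]` that ends below `1`. The first event has probability at most
`(1 - c)^n`. For the second, integrate over the coordinate `u i` first (Fubini): `u i` must lie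
below `1 - c`, and each of the other `n - 1` points must avoid a window of length `c`, so each of
these `n` events also has probability at most `(1 - c)^n`. A union bound gives `(n + 1)(1 - c)^n`.
-/

open Finset in
theorem Monotone.le_card_filter_le_iff {α : Type*} [LinearOrder α] {n : ℕ} {g : Fin n → α}
    (hg : Monotone g) (k : Fin n) (x : α) : (k : ℕ) + 1 ≤ #{j | g j ≤ x} ↔ g k ≤ x := by
  constructor
  · intro hk
    by_contra! hxk
    have : ({j | g j ≤ x} : Finset (Fin n)) ⊆ Iio k := fun j hj => by
      simp only [mem_filter, mem_univ, true_and] at hj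
      exact mem_Iio.2 (lt_of_not_ge fun hkj => (hxk.trans_le (hg hkj)).not_ge hj)
    have := card_le_card this
    simp only [Fin.card_Iio] at this
    omega
  · intro hkx
    have : Iic k ⊆ ({j | g j ≤ x} : Finset (Fin n)) := fun j hj =>
      mem_filter.2 ⟨mem_univ _, (hg (mem_Iic.1 hj)).trans hkx⟩
    simpa using card_le_card this

section OrderStat

variable {n : ℕ}

@[simp]
theorem orderStat_zero (u : Fin n → ℝ) : orderStat n u 0 = 0 := rfl

open Finset in
theorem orderStat_succ_eq_sort (u : Fin n → ℝ) (k : Fin n) :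
    orderStat n u (k + 1) = u (Tuple.sort u k) := by
  have hset : {x : ℝ | k + 1 ≤ #{i | u i ≤ x}} = Set.Ici (u (Tuple.sort u k)) := by
    ext x
    have hcard : #{i | u i ≤ x} = #{j | (u ∘ Tuple.sort u) j ≤ x} :=
      card_equiv (Tuple.sort u).symm (fun i => by simp)
    rw [Set.mem_ofPred_eq, hcard, (Tuple.monotone_sort u).le_card_filter_le_iff]
    rfl
  rw [orderStat, if_neg k.val.succ_ne_zero, if_neg (by omega), hset, csInf_Ici]

theorem orderStat_succ_le_of_orderStat_lt {u : Fin n → ℝ} {k : ℕ} (hk : k ≤ n) {j : Fin n}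
    (h : orderStat n u k < u j) : orderStat n u (k + 1) ≤ u j := by
  have hg := Tuple.monotone_sort u
  have hj : u j = (u ∘ Tuple.sort u) ((Tuple.sort u).symm j) := by simp
  rcases k with _ | k
  · rw [orderStat_succ_eq_sort u ⟨0, j.pos⟩, hj]
    exact hg (Fin.le_def.2 (Nat.zero_le _))
  · rw [orderStat_succ_eq_sort u ⟨k, hk⟩, hj] at h
    have hkj : k < (Tuple.sort u).symm j := lt_of_not_ge fun hjk => (hg hjk).not_gt h
    rw [orderStat_succ_eq_sort u ⟨k + 1, by omega⟩, hj]
    exact hg (Fin.le_def.2 hkj)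

theorem orderStat_le_one {u : Fin n → ℝ} (hu : ∀ i, u i ≤ 1) {k : ℕ} (hk : k ≤ n + 1) :
    orderStat n u k ≤ 1 := by
  rcases k with _ | k
  · simp
  · rcases (by omega : k < n ∨ k = n) with hkn | rfl
    · exact (orderStat_succ_eq_sort u ⟨k, hkn⟩).trans_le (hu _)
    · simp [orderStat]

end OrderStat

open Set

def emptyGapAfter {n : ℕ} (c : ℝ) (i : Fin n) : Set (Fin n → ℝ) :=
  {u | u i + c < 1 ∧ ∀ j, u j ∉ Ioc (u i) (u i + c)}

theorem spacing_event_subset (n : ℕ) (c : ℝ) :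
    {u : Fin n → ℝ | (∀ i, u i ∈ Ioo (0 : ℝ) 1) ∧
        ∃ k ≤ n, c < orderStat n u (k + 1) - orderStat n u k} ⊆
      (univ.pi fun _ => Ioi c) ∪ ⋃ i, emptyGapAfter c i := by
  rintro u ⟨hu, k, hk, hc⟩
  rcases k with _ | k
  · refine Or.inl fun j _ => ?_
    rw [orderStat_zero, sub_zero] at hc
    exact hc.trans_le (orderStat_succ_le_of_orderStat_lt (Nat.zero_le n) (hu j).1)
  · have hi := orderStat_succ_eq_sort u ⟨k, hk⟩
    refine Or.inr (mem_iUnion.2 ⟨Tuple.sort u ⟨k, hk⟩, ?_, fun j hj => ?_⟩)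
    · linarith [orderStat_le_one (fun j => (hu j).2.le) (k := k + 2) (by omega)]
    · rw [← hi] at hj
      linarith [hj.2, orderStat_succ_le_of_orderStat_lt hk hj.1]

instance : IsProbabilityMeasure unifMeas :=
  ⟨by simp [unifMeas]⟩

theorem unifMeas_le_volume {s t : Set ℝ} (h : s ∩ Ioo 0 1 ⊆ t) : unifMeas s ≤ volume t := by
  rw [unifMeas, Measure.restrict_apply' measurableSet_Ioo]
  exact measure_mono h

theorem unifMeas_Ioi_le (c : ℝ) : unifMeas (Ioi c) ≤ ENNReal.ofReal (1 - c) :=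
  (unifMeas_le_volume (t := Ioo c 1) fun _ hx => ⟨hx.1, hx.2.2⟩).trans_eq Real.volume_Ioo

theorem unifMeas_Iio_le (a : ℝ) : unifMeas (Iio a) ≤ ENNReal.ofReal a :=
  (unifMeas_le_volume (t := Ioo 0 a) fun _ hx => ⟨hx.2.1, hx.1⟩).trans_eq (by simp)

theorem unifMeas_compl_Ioc_le {x c : ℝ} (hx : 0 ≤ x) (hxc : x + c ≤ 1) :
    unifMeas (Ioc x (x + c))ᶜ ≤ ENNReal.ofReal (1 - c) :=
  calc unifMeas (Ioc x (x + c))ᶜ ≤ volume (Ioc 0 x ∪ Ioo (x + c) 1) := by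
        refine unifMeas_le_volume fun y ⟨hy, hy0, hy1⟩ => ?_
        rcases le_or_gt y x with hyx | hxy
        · exact Or.inl ⟨hy0, hyx⟩
        · exact Or.inr ⟨lt_of_not_ge fun h => hy ⟨hxy, h⟩, hy1⟩
    _ ≤ volume (Ioc 0 x) + volume (Ioo (x + c) 1) := measure_union_le _ _
    _ = ENNReal.ofReal (1 - c) := by
        rw [Real.volume_Ioc, Real.volume_Ioo, ← ENNReal.ofReal_add (by linarith) (by linarith)]
        ring_nf

theorem unifPi_pi_Ioi_le (n : ℕ) (c : ℝ) :
    unifPi n (univ.pi fun _ => Ioi c) ≤ ENNReal.ofReal (1 - c) ^ n := by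
  rw [unifPi, Measure.pi_pi]
  simp only [Finset.prod_const, Finset.card_univ, Fintype.card_fin]
  gcongr
  exact unifMeas_Ioi_le c

def emptyGapAfterFst (m : ℕ) (c : ℝ) : Set (ℝ × (Fin m → ℝ)) :=
  {p | p.1 + c < 1 ∧ p.2 ∈ univ.pi fun _ => (Ioc p.1 (p.1 + c))ᶜ}

theorem emptyGapAfter_eq_preimage {m : ℕ} (c : ℝ) (i : Fin (m + 1)) :
    emptyGapAfter c i =
      MeasurableEquiv.piFinSuccAbove (fun _ => ℝ) i ⁻¹' emptyGapAfterFst m c := by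
  ext u
  simp only [emptyGapAfter, emptyGapAfterFst, mem_ofPred_eq, mem_preimage, mem_pi, mem_univ,
    true_imp_iff, mem_compl_iff, MeasurableEquiv.piFinSuccAbove_apply,
    Fin.insertNthEquiv_symm_apply, Fin.removeNth]
  refine and_congr_right fun _ => ⟨fun h j => h _, fun h j => ?_⟩
  rcases eq_or_ne j i with rfl | hji
  · exact fun hj => hj.1.false
  · obtain ⟨j, rfl⟩ := Fin.exists_succAbove_eq hji
    exact h j

theorem measurableSet_emptyGapAfterFst (m : ℕ) (c : ℝ) :
    MeasurableSet (emptyGapAfterFst m c) := by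
  simp only [emptyGapAfterFst, mem_pi, mem_univ, true_imp_iff, mem_compl_iff, mem_Ioc, ofPred_and,
    ofPred_forall]
  refine (measurableSet_lt (by fun_prop) measurable_const).inter (.iInter fun j => ?_)
  have hj : Measurable fun p : ℝ × (Fin m → ℝ) => p.2 j := by fun_prop
  exact ((measurableSet_lt measurable_fst hj).inter
    (measurableSet_le hj (measurable_fst.add_const c))).compl

theorem unifPi_emptyGapAfter_le {n : ℕ} (c : ℝ) (i : Fin n) :
    unifPi n (emptyGapAfter c i) ≤ ENNReal.ofReal (1 - c) ^ n := by
  obtain ⟨m, rfl⟩ : ∃ m, n = m + 1 := Nat.exists_eq_succ_of_ne_zero i.pos.ne'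
  set q := ENNReal.ofReal (1 - c)
  have hslice : ∀ x ∈ Ioo (0 : ℝ) 1,
      Measure.pi (fun _ : Fin m => unifMeas) (Prod.mk x ⁻¹' emptyGapAfterFst m c) ≤
      (Iio (1 - c)).indicator (fun _ => q ^ m) x := by
    intro x hx
    by_cases hxc : x + c < 1
    · rw [indicator_of_mem (by rw [mem_Iio]; linarith)]
      simp only [emptyGapAfterFst, preimage_ofPred_eq, hxc, true_and, ofPred_mem_eq, Measure.pi_pi,
        Finset.prod_const, Finset.card_univ, Fintype.card_fin]
      gcongr
      exact unifMeas_compl_Ioc_le hx.1.le hxc.le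
    · simp [emptyGapAfterFst, hxc]
  rw [emptyGapAfter_eq_preimage, unifPi,
    (measurePreserving_piFinSuccAbove (fun _ => unifMeas) i).measure_preimage_equiv,
    Measure.prod_apply (measurableSet_emptyGapAfterFst m c)]
  calc _ ≤ ∫⁻ x, (Iio (1 - c)).indicator (fun _ => q ^ m) x ∂unifMeas :=
        lintegral_mono_ae (ae_restrict_of_forall_mem measurableSet_Ioo hslice)
    _ = q ^ m * unifMeas (Iio (1 - c)) := by
        rw [lintegral_indicator measurableSet_Iio, setLIntegral_const]
    _ ≤ q ^ (m + 1) := by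
        rw [pow_succ]
        gcongr
        exact unifMeas_Iio_le _

theorem stmt13_general (n : ℕ) (c : ℝ) (hc1 : c ≤ 1) :
    unifPi n
        {u : Fin n → ℝ | (∀ i, u i ∈ Set.Ioo (0 : ℝ) 1) ∧
          ∃ k ≤ n, c < orderStat n u (k + 1) - orderStat n u k} ≤
      (n + 1 : ℝ≥0∞) * ENNReal.ofReal ((1 - c) ^ n) := by
  rw [ENNReal.ofReal_pow (by linarith)]
  calc _ ≤ unifPi n ((univ.pi fun _ => Ioi c) ∪ ⋃ i, emptyGapAfter c i) :=
        measure_mono (spacing_event_subset n c)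
    _ ≤ unifPi n (univ.pi fun _ => Ioi c) + ∑ i, unifPi n (emptyGapAfter c i) :=
        (measure_union_le _ _).trans (add_le_add_right (measure_iUnion_fintype_le _ _) _)
    _ ≤ ENNReal.ofReal (1 - c) ^ n + ∑ _ : Fin n, ENNReal.ofReal (1 - c) ^ n := by
        gcongr with i
        exacts [unifPi_pi_Ioi_le n c, unifPi_emptyGapAfter_le c i]
    _ = (n + 1) * ENNReal.ofReal (1 - c) ^ n := by
        simp only [Finset.sum_const, Finset.card_univ, Fintype.card_fin, nsmul_eq_mul]
        ring

/-- For `n ≥ 1` and `0 ≤ c ≤ 1`, the probability that some consecutive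
spacing of the order statistics of `n` i.i.d. `Uniform(0,1)` variables (with boundary
conventions `u_(0) = 0`, `u_(n+1) = 1`) exceeds `c` is at most `(n+1)(1 − c)^n`. -/
theorem stmt13 (n : ℕ) (hn : 1 ≤ n) (c : ℝ) (hc0 : 0 ≤ c) (hc1 : c ≤ 1) :
    unifPi n
        {u : Fin n → ℝ | (∀ i, u i ∈ Set.Ioo (0 : ℝ) 1) ∧
          ∃ k ≤ n, c < orderStat n u (k + 1) - orderStat n u k} ≤
      (n + 1 : ℝ≥0∞) * ENNReal.ofReal ((1 - c) ^ n) :=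
  stmt13_general n c hc1
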